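/- arXiv:2307.03474 — 5 statements merged into one kernel-verified Lean document; each statement's English description precedes it below -/
import Mathlib

section
/- For any positive integers n and any composition s = (s_1,...,s_n) of positive integers, the following identity holds: ∏_{i=1}^{n-1} (1 + ∑_{r=n-i+1}^{n} s_r) = ∑_{j} C(s_n+1, j_1) C(s_{n-1}+1, j_2) ··· C(s_2+1, j_{n-1}) · ∏_{i=1}^{n-1} (j_1 + ··· + j_i - i + 1), where the sum is over weak compositions j = (j_1,...,j_{n-1}) of n-1 satisfying j_1 + ··· + j_i ≥ i for all i, and C(a,b) denotes the binomial coefficient. -/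
/-!
Write the binomial tops as `cᵢ + 1` and let `lidskiiSum a l T` be the right-hand sum taken over
all weak compositions of `T` into `l` parts. The dominance condition can be dropped, since a
non-dominating `j` makes one of the factors `j₀ + ⋯ + jᵢ - i` vanish (truncated subtraction).
Peeling off the last part gives
`lidskiiSum a (l+1) T = (T - l) ∑_{p+q=T} lidskiiSum a l p · C(a_l, q)`, and Vandermonde's identity
in the form `∑_{k+r=t+1} k C(B,k) C(b,r) = B C(B-1+b, t)` turns this, by induction on `l`, into
`lidskiiSum (c + 1) (l+1) T = (T - l) ∏_{i<l} Bᵢ · C(B_l, T - l)` with `Bᵢ = 1 + c₀ + ⋯ + cᵢ`.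
At `T = l + 1` this is `∏_{i≤l} Bᵢ`, the left-hand side with the indices of `s` reversed.
-/

namespace SPermutahedron

open Finset

theorem sum_antidiagonal_tsub_add {M : Type*} [AddCommMonoid M] (g : ℕ → ℕ → M)
    (hg : ∀ r, g 0 r = 0) (l t : ℕ) :
    ∑ p ∈ antidiagonal (l + t), g (p.1 - l) p.2 = ∑ p ∈ antidiagonal t, g p.1 p.2 := by
  induction l with
  | zero => simp
  | succ l ih =>
    rw [add_right_comm, Nat.sum_antidiagonal_succ]
    simpa [hg] using ih

theorem sum_antidiagonal_mul_choose_mul_choose (B b t : ℕ) :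
    ∑ p ∈ antidiagonal (t + 1), p.1 * B.choose p.1 * b.choose p.2 =
      B * (B - 1 + b).choose t := by
  rw [Nat.sum_antidiagonal_succ, Nat.add_choose_eq, mul_sum]
  cases B with
  | zero => simp
  | succ B =>
    simp only [zero_mul, zero_add, Nat.add_sub_cancel]
    refine sum_congr rfl fun p _ => ?_
    rw [← mul_assoc, mul_comm (p.1 + 1), ← Nat.add_one_mul_choose_eq]

theorem sum_antidiagonalTuple_succ {M : Type*} [AddCommMonoid M] (l T : ℕ)
    (f : (Fin (l + 1) → ℕ) → M) :
    ∑ j ∈ Nat.antidiagonalTuple (l + 1) T, f j =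
      ∑ p ∈ antidiagonal T, ∑ j ∈ Nat.antidiagonalTuple l p.1, f (Fin.snoc j p.2) := by
  rw [sum_sigma']
  refine sum_nbij' (fun j => ⟨(∑ i : Fin l, j i.castSucc, j (Fin.last l)), Fin.init j⟩)
    (fun x => Fin.snoc x.2 x.1.2) ?_ ?_ ?_ ?_ ?_
  · intro j hj
    simp_all [Nat.mem_antidiagonalTuple, Fin.sum_univ_castSucc, Fin.init]
  · rintro ⟨⟨p₁, p₂⟩, j⟩ hx
    simp_all [Nat.mem_antidiagonalTuple, Fin.sum_univ_castSucc]
  · intro j _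
    simp
  · rintro ⟨⟨p₁, p₂⟩, j⟩ hx
    simp_all [Nat.mem_antidiagonalTuple]
  · intro j _
    simp

theorem sum_Iic_snoc_castSucc {l : ℕ} (j : Fin l → ℕ) (t : ℕ) (i : Fin l) :
    ∑ k ∈ Iic i.castSucc, (Fin.snoc j t : Fin (l + 1) → ℕ) k = ∑ k ∈ Iic i, j k := by
  rw [← Fin.map_castSuccEmb_Iic, sum_map]
  simp

theorem sum_Iic_snoc_last {l : ℕ} (j : Fin l → ℕ) (t : ℕ) :
    ∑ k ∈ Iic (Fin.last l), (Fin.snoc j t : Fin (l + 1) → ℕ) k = ∑ k, j k + t := by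
  rw [← Fin.top_eq_last, Iic_top, Fin.sum_univ_castSucc]
  simp

def lidskiiSum (a : ℕ → ℕ) (l T : ℕ) : ℕ :=
  ∑ j ∈ Nat.antidiagonalTuple l T,
    (∏ i : Fin l, (a i).choose (j i)) * ∏ i : Fin l, ((∑ k ∈ Iic i, j k) - i)

theorem lidskiiSum_zero_zero (a : ℕ → ℕ) : lidskiiSum a 0 0 = 1 := by
  simp [lidskiiSum]

theorem lidskiiSum_succ (a : ℕ → ℕ) (l T : ℕ) :
    lidskiiSum a (l + 1) T =
      (T - l) * ∑ p ∈ antidiagonal T, lidskiiSum a l p.1 * (a l).choose p.2 := by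
  rw [lidskiiSum, sum_antidiagonalTuple_succ, mul_sum]
  refine sum_congr rfl fun p hp => ?_
  rw [lidskiiSum, sum_mul, mul_sum]
  refine sum_congr rfl fun j hj => ?_
  rw [HasAntidiagonal.mem_antidiagonal] at hp
  rw [Nat.mem_antidiagonalTuple] at hj
  simp only [Fin.prod_univ_castSucc, Fin.snoc_castSucc, Fin.snoc_last, Fin.val_castSucc,
    Fin.val_last, sum_Iic_snoc_castSucc, sum_Iic_snoc_last, hj, hp]
  ring

theorem lidskiiSum_succ_eq (c : ℕ → ℕ) (l T : ℕ) :
    lidskiiSum (fun i => c i + 1) (l + 1) T =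
      (T - l) * (∏ i ∈ range l, (1 + ∑ k ∈ range (i + 1), c k)) *
        (1 + ∑ k ∈ range (l + 1), c k).choose (T - l) := by
  induction l generalizing T with
  | zero =>
    rw [lidskiiSum_succ, Nat.sum_antidiagonal_eq_sum_range_succ_mk, sum_eq_single 0]
    · simp [lidskiiSum_zero_zero, add_comm]
    · rintro (_ | i) _ hi
      · exact absurd rfl hi
      · simp [lidskiiSum]
    · simp
  | succ l ih =>
    rcases le_or_gt T (l + 1) with hT | hT
    · rw [lidskiiSum_succ, Nat.sub_eq_zero_of_le hT]
      simp
    obtain ⟨t, rfl⟩ := Nat.exists_eq_add_of_le hT.le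
    set B := 1 + ∑ k ∈ range (l + 1), c k
    set b := c (l + 1) + 1
    have hB : B - 1 + b = 1 + ∑ k ∈ range (l + 1 + 1), c k := by
      rw [sum_range_succ]; omega
    have hvandermonde : ∑ p ∈ antidiagonal (l + 1 + t),
        (p.1 - l) * B.choose (p.1 - l) * b.choose p.2 = B * (B - 1 + b).choose t := by
      rw [add_assoc, add_comm 1 t,
        sum_antidiagonal_tsub_add (fun k r => k * B.choose k * b.choose r) (by simp),
        sum_antidiagonal_mul_choose_mul_choose]
    rw [lidskiiSum_succ]
    simp_rw [ih, mul_right_comm _ (∏ i ∈ range l, _)]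
    rw [← sum_mul, hvandermonde, hB, prod_range_succ, Nat.add_sub_cancel_left]
    ring

theorem lidskiiSum_self (c : ℕ → ℕ) (m : ℕ) :
    lidskiiSum (fun i => c i + 1) m m = ∏ i ∈ range m, (1 + ∑ k ∈ range (i + 1), c k) := by
  cases m with
  | zero => exact lidskiiSum_zero_zero _
  | succ l => rw [lidskiiSum_succ_eq, Nat.add_sub_cancel_left, Nat.choose_one_right, one_mul,
      prod_range_succ]

theorem sum_filter_dominating_eq_lidskiiSum (a : ℕ → ℕ) (m T : ℕ) :
    ∑ j ∈ (Nat.antidiagonalTuple m T).filter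
        (fun j => ∀ i : Fin m, (i : ℕ) + 1 ≤ ∑ k ∈ Iic i, j k),
      (∏ i : Fin m, (a i).choose (j i)) * ∏ i : Fin m, ((∑ k ∈ Iic i, j k) - i) =
      lidskiiSum a m T := by
  refine sum_filter_of_ne fun j _ hj i => ?_
  by_contra hi
  exact hj (mul_eq_zero_of_right _ (prod_eq_zero (mem_univ i) (by omega)))

theorem sum_Icc_eq_sum_range_tsub (s : ℕ → ℕ) {n i : ℕ} (hi : i ≤ n) :
    ∑ r ∈ Icc (n - i) n, s r = ∑ k ∈ range (i + 1), s (n - k) := by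
  rw [← Nat.Ico_zero_eq_range, sum_Ico_reflect _ _ (by omega), ← Ico_add_one_right_eq_Icc]
  congr 2; omega

theorem prod_Icc_one_eq_prod_range {M : Type*} [CommMonoid M] (f : ℕ → M) (m : ℕ) :
    ∏ i ∈ Icc 1 m, f i = ∏ i ∈ range m, f (i + 1) := by
  rw [← Ico_add_one_right_eq_Icc, prod_Ico_eq_prod_range, Nat.add_sub_cancel]
  simp_rw [add_comm 1]

theorem first_lidskii_decomposition_general (n : ℕ) (s : ℕ → ℕ) :
    ∏ i ∈ Finset.Icc 1 (n - 1), (1 + ∑ r ∈ Finset.Icc (n - i + 1) n, s r) =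
      ∑ j ∈ (Finset.Nat.antidiagonalTuple (n - 1) (n - 1)).filter
          (fun j => ∀ i : Fin (n - 1), (i : ℕ) + 1 ≤ ∑ k ∈ Finset.Iic i, j k),
        (∏ i : Fin (n - 1), Nat.choose (s (n - (i : ℕ)) + 1) (j i)) *
          ∏ i : Fin (n - 1), ((∑ k ∈ Finset.Iic i, j k) - (i : ℕ)) := by
  rw [sum_filter_dominating_eq_lidskiiSum (fun i => s (n - i) + 1),
    lidskiiSum_self (fun k => s (n - k)), prod_Icc_one_eq_prod_range]
  refine prod_congr rfl fun i hi => ?_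
  rw [mem_range] at hi
  rw [show n - (i + 1) + 1 = n - i by omega, sum_Icc_eq_sum_range_tsub s (by omega)]

/-- (First Lidskii-type decomposition, Eq. (4).) For a
composition `s = (s₁, …, sₙ)` of positive integers,
`∏_{i=1}^{n-1} (1 + ∑_{r=n-i+1}^n s_r)
  = ∑_j C(sₙ+1, j₁) C(sₙ₋₁+1, j₂) ⋯ C(s₂+1, j_{n-1}) ∏_{i=1}^{n-1} (j₁+⋯+jᵢ-i+1)`,
the sum being over weak compositions `j` of `n-1` with `j₁+⋯+jᵢ ≥ i` for all `i`. -/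
theorem first_lidskii_decomposition (n : ℕ) (hn : 0 < n) (s : ℕ → ℕ)
    (hs : ∀ i, 1 ≤ i → i ≤ n → 1 ≤ s i) :
    ∏ i ∈ Finset.Icc 1 (n - 1), (1 + ∑ r ∈ Finset.Icc (n - i + 1) n, s r) =
      ∑ j ∈ (Finset.Nat.antidiagonalTuple (n - 1) (n - 1)).filter
          (fun j => ∀ i : Fin (n - 1), (i : ℕ) + 1 ≤ ∑ k ∈ Finset.Iic i, j k),
        (∏ i : Fin (n - 1), Nat.choose (s (n - (i : ℕ)) + 1) (j i)) *
          ∏ i : Fin (n - 1), ((∑ k ∈ Finset.Iic i, j k) - (i : ℕ)) :=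
  first_lidskii_decomposition_general n s

end SPermutahedron
end

section
/- Let s = (s_1,...,s_n) be a composition of positive integers. The set of Stirling s-permutations is in bijection with tuples of integers (f_1, ..., f_{n-1}) where 0 ≤ f_i ≤ s_n + s_{n-1} + ··· + s_{i+1} for each i ∈ {1,...,n-1}: given a Stirling s-permutation w, set f_i to be the number of letters strictly greater than i occurring before the i-block of w. -/
namespace SPermutahedron

/-! ### Stirling `s`-permutations -/

/-- A word avoids the pattern `121`: there is never a letter `j` strictly in
between two occurrences of a letter `i` with `i < j`. -/
def Avoids121 (w : List ℕ) : Prop :=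
  ¬ ∃ (u₁ u₂ u₃ u₄ : List ℕ) (i j : ℕ), i < j ∧
      w = u₁ ++ i :: u₂ ++ j :: u₃ ++ i :: u₄

/-- A Stirling `s`-permutation: a permutation of the word `1^{s 1} 2^{s 2} ⋯ n^{s n}`
avoiding the pattern `121`. -/
def IsStirling (s : ℕ → ℕ) (n : ℕ) (w : List ℕ) : Prop :=
  (∀ x ∈ w, 1 ≤ x ∧ x ≤ n) ∧ (∀ i, 1 ≤ i → i ≤ n → w.count i = s i) ∧ Avoids121 w

/-- `(a, c)` is an ascent of `w`: `a < c` and `ac` is a consecutive substring. -/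
def WordAscent (w : List ℕ) (a c : ℕ) : Prop :=
  a < c ∧ ∃ u v, w = u ++ a :: c :: v

/-- `(a, c)` is a descent of `w`: `a < c` and `ca` is a consecutive substring. -/
def WordDescent (w : List ℕ) (a c : ℕ) : Prop :=
  a < c ∧ ∃ u v, w = u ++ c :: a :: v

/-- The inversion multiplicity `#_w(c, a)`: the number of occurrences of `c`
preceding the `a`-block of `w` (i.e. preceding the first occurrence of `a`). -/
def invW (w : List ℕ) (c a : ℕ) : ℕ := (w.takeWhile (fun x => decide (x ≠ a))).count c

/-! The letter `m` is the smallest one of a Stirling permutation `w` on the letters `m, …, n`,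
so by 121-avoidance its occurrences form one consecutive block; deleting the block leaves a
Stirling permutation on `m + 1, …, n`, and conversely a block of `m`s may be inserted into any
gap of such a word. The number of letters before the `m`-block is the index of that gap, while
the corresponding numbers for the larger letters do not change. Hence, by descending induction
on `m`, the word is determined by these numbers, and every tuple within the bounds is attained. -/

open scoped List
open Finset (Icc)

def greaterBefore (w : List ℕ) (a : ℕ) : ℕ :=
  ((w.takeWhile (fun x => decide (x ≠ a))).filter (fun x => decide (a < x))).length

lemma greaterBefore_cons (x : ℕ) (w : List ℕ) (a : ℕ) :
    greaterBefore (x :: w) a =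
      if x = a then 0 else (if a < x then 1 else 0) + greaterBefore w a := by
  unfold greaterBefore
  by_cases hx : x = a
  · simp [hx]
  · by_cases hax : a < x <;> simp [hx, hax, add_comm]

lemma greaterBefore_append_replicate_append_self {a k : ℕ} {u : List ℕ} (v : List ℕ)
    (hu : ∀ x ∈ u, a < x) (hk : k ≠ 0) :
    greaterBefore (u ++ List.replicate k a ++ v) a = u.length := by
  induction u with
  | nil =>
    obtain ⟨k, rfl⟩ := Nat.exists_eq_succ_of_ne_zero hk
    simp [List.replicate_succ, greaterBefore_cons]
  | cons x u ih =>
    have hx := hu x List.mem_cons_self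
    rw [List.cons_append, List.cons_append, greaterBefore_cons, if_neg hx.ne', if_pos hx,
      ih fun y hy => hu y (List.mem_cons_of_mem x hy), List.length_cons, add_comm]

lemma greaterBefore_append_replicate_append_of_lt {a b : ℕ} (k : ℕ) (u v : List ℕ)
    (hab : a < b) : greaterBefore (u ++ List.replicate k a ++ v) b = greaterBefore (u ++ v) b := by
  induction u with
  | nil =>
    induction k with
    | zero => simp
    | succ k ih => simpa [List.replicate_succ, greaterBefore_cons, hab.ne, hab.not_gt] using ih
  | cons x u ih => simp only [List.cons_append, greaterBefore_cons, ih]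

lemma greaterBefore_le_sum_count {a n : ℕ} {w : List ℕ} (hw : ∀ x ∈ w, x ≤ n) :
    greaterBefore w a ≤ ∑ r ∈ Icc (a + 1) n, w.count r := by
  have hfilter : ∀ x ∈ (w.filter (fun x => decide (a < x)) : Multiset ℕ), x ∈ Icc (a + 1) n := by
    intro x hx
    simp only [Multiset.mem_coe, List.mem_filter, decide_eq_true_eq] at hx
    exact Finset.mem_Icc.2 ⟨hx.2, hw x hx.1⟩
  calc greaterBefore w a ≤ (w.filter (fun x => decide (a < x))).length :=
        ((List.takeWhile_sublist _).filter _).length_le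
    _ = ∑ r ∈ Icc (a + 1) n, (w.filter (fun x => decide (a < x))).count r := by
        rw [← Multiset.coe_card, ← Multiset.sum_count_eq_card hfilter]
        simp only [Multiset.coe_count]
    _ = ∑ r ∈ Icc (a + 1) n, w.count r := Finset.sum_congr rfl fun r hr =>
        List.count_filter (by simpa using (Finset.mem_Icc.1 hr).1)

lemma avoids121_iff {w : List ℕ} : Avoids121 w ↔ ∀ i j, i < j → ¬ [i, j, i] <+ w := by
  constructor
  · rintro h i j hij hsub
    obtain ⟨r₁, r₂, rfl, hi, hji⟩ := List.cons_sublist_iff.1 hsub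
    obtain ⟨r₃, r₄, rfl, hj, hi'⟩ := List.cons_sublist_iff.1 hji
    obtain ⟨u₁, u₂, rfl⟩ := List.append_of_mem hi
    obtain ⟨u₃, u₄, rfl⟩ := List.append_of_mem hj
    obtain ⟨u₅, u₆, rfl⟩ := List.append_of_mem (List.singleton_sublist.1 hi')
    exact h ⟨u₁, u₂ ++ u₃, u₄ ++ u₅, u₆, i, j, hij, by simp⟩
  · rintro h ⟨u₁, u₂, u₃, u₄, i, j, hij, rfl⟩
    exact h i j hij (by simp)

lemma Avoids121.sublist {w l : List ℕ} (hw : Avoids121 w) (hl : l <+ w) : Avoids121 l := by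
  rw [avoids121_iff] at hw ⊢
  exact fun i j hij hsub => hw i j hij (hsub.trans hl)

lemma _root_.List.Sublist.of_cons_sublist_append {α : Type*} {x : α} {l u w : List α} (hx : x ∉ u)
    (h : x :: l <+ u ++ w) : x :: l <+ w := by
  induction u with
  | nil => exact h
  | cons y u ih =>
    exact ih (fun h' => hx (List.mem_cons_of_mem y h'))
      (h.of_cons_of_ne (fun hxy => hx (hxy ▸ List.mem_cons_self)))

lemma Avoids121.append_replicate_append {a : ℕ} (k : ℕ) {u v : List ℕ}
    (hmin : ∀ x ∈ u ++ v, a < x) (h : Avoids121 (u ++ v)) :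
    Avoids121 (u ++ List.replicate k a ++ v) := by
  rw [avoids121_iff] at h ⊢
  intro i j hij hsub
  by_cases hia : i = a
  · -- Reading forwards the pattern `i j i` starts after `u`, reading backwards it ends before `v`.
    subst hia
    have hi_u : i ∉ u := fun hi => (hmin i (List.mem_append_left v hi)).false
    have hi_v : i ∉ v.reverse := fun hi =>
      (hmin i (List.mem_append_right u (List.mem_reverse.1 hi))).false
    have h₁ : [i, j, i] <+ List.replicate k i ++ v :=
      (by simpa only [List.append_assoc] using hsub : [i, j, i] <+ u ++ _).of_cons_sublist_append
        hi_u
    have h₂ : [i, j, i] <+ v.reverse ++ List.replicate k i := by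
      simpa using List.reverse_sublist.2 h₁
    have h₃ : j ∈ List.replicate k i := (h₂.of_cons_sublist_append hi_v).subset (by simp)
    exact hij.ne' (List.eq_of_mem_replicate h₃)
  · -- The pattern avoids the letter `a`, so it survives deleting the block of `a`s.
    have hi : i ∈ u ++ v := by
      have := hsub.subset (List.mem_cons_self (a := i))
      simp only [List.mem_append, List.mem_replicate] at this ⊢
      tauto
    have hai : a < i := hmin i hi
    have hrep : (List.replicate k a).filter (fun x => decide (x ≠ a)) = [] := by simp
    have hfilter := hsub.filter (fun x => decide (x ≠ a))
    rw [List.filter_eq_self.2 (by simp [hia, (hai.trans hij).ne']), List.filter_append, List.filter_append, hrep,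
      List.append_nil, ← List.filter_append,
      List.filter_eq_self.2 fun x hx => by simpa using (hmin x hx).ne'] at hfilter
    exact h i j hij hfilter

lemma Avoids121.exists_eq_append_replicate_append {a : ℕ} {w : List ℕ} (hw : Avoids121 w)
    (hmin : ∀ x ∈ w, a ≤ x) : ∃ u k v, w = u ++ List.replicate k a ++ v ∧ a ∉ u ∧ a ∉ v := by
  induction w with
  | nil => exact ⟨[], 0, [], by simp⟩
  | cons x t ih =>
    obtain ⟨u, k, v, rfl, hu, hv⟩ := ih (hw.sublist (List.sublist_cons_self x _))
      fun y hy => hmin y (List.mem_cons_of_mem x hy)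
    by_cases hx : x = a
    · subst hx
      rcases u with _ | ⟨y, u⟩
      · exact ⟨[], k + 1, v, by simp [List.replicate_succ], by simp, hv⟩
      rcases k with _ | k
      · exact ⟨[], 1, y :: u ++ v, by simp, by simp, List.not_mem_append hu hv⟩
      have hxy : x < y := (hmin y (by simp)).lt_of_ne fun h => hu (by simp [h])
      exact (avoids121_iff.1 hw x y hxy (by simp [List.replicate_succ])).elim
    · exact ⟨x :: u, k, v, by simp, by simp [Ne.symm hx, hu], hv⟩

def IsStirlingOn (s : ℕ → ℕ) (m n : ℕ) (w : List ℕ) : Prop :=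
  (∀ x ∈ w, m ≤ x ∧ x ≤ n) ∧ (∀ i, m ≤ i → i ≤ n → w.count i = s i) ∧ Avoids121 w

lemma isStirling_iff_isStirlingOn {s : ℕ → ℕ} {n : ℕ} {w : List ℕ} :
    IsStirling s n w ↔ IsStirlingOn s 1 n w := Iff.rfl

namespace IsStirlingOn

section

variable {s : ℕ → ℕ} {m n : ℕ} {w : List ℕ}

lemma eq_nil_of_lt (hw : IsStirlingOn s m n w) (hnm : n < m) : w = [] :=
  List.eq_nil_iff_forall_not_mem.2 fun x hx => by have := hw.1 x hx; omega

lemma length_eq (hw : IsStirlingOn s m n w) : w.length = ∑ r ∈ Icc m n, s r := by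
  have hmem : ∀ x ∈ (w : Multiset ℕ), x ∈ Icc m n := fun x hx =>
    Finset.mem_Icc.2 (hw.1 x (Multiset.mem_coe.1 hx))
  rw [← Multiset.coe_card, ← Multiset.sum_count_eq_card hmem]
  exact Finset.sum_congr rfl fun r hr =>
    (Multiset.coe_count r w).trans (hw.2.1 r (Finset.mem_Icc.1 hr).1 (Finset.mem_Icc.1 hr).2)

lemma greaterBefore_le (hw : IsStirlingOn s m n w) {a : ℕ} (ha : m ≤ a) :
    greaterBefore w a ≤ ∑ r ∈ Icc (a + 1) n, s r :=
  (greaterBefore_le_sum_count fun x hx => (hw.1 x hx).2).trans_eq <|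
    Finset.sum_congr rfl fun r hr => by
      obtain ⟨h₁, h₂⟩ := Finset.mem_Icc.1 hr
      exact hw.2.1 r (by omega) h₂

lemma exists_eq_append_replicate_append (hw : IsStirlingOn s m n w) (hmn : m ≤ n) :
    ∃ u v, w = u ++ List.replicate (s m) m ++ v ∧ IsStirlingOn s (m + 1) n (u ++ v) := by
  obtain ⟨u, k, v, rfl, hu, hv⟩ :=
    hw.2.2.exists_eq_append_replicate_append fun x hx => (hw.1 x hx).1
  have hk : k = s m := by
    simpa [List.count_eq_zero_of_not_mem, hu, hv] using hw.2.1 m le_rfl hmn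
  subst hk
  refine ⟨u, v, rfl, fun x hx => ?_, fun i hi hin => ?_, hw.2.2.sublist ?_⟩
  · have hxm : x ≠ m := by rintro rfl; simp_all
    have := hw.1 x (by simp only [List.mem_append, List.mem_replicate] at hx ⊢; tauto)
    omega
  · have := hw.2.1 i (by omega) hin
    simp only [List.count_append, List.count_replicate] at this ⊢
    simpa [show m ≠ i by omega] using this
  · exact (List.sublist_append_left u _).append (List.Sublist.refl v)

lemma append_replicate_append {u v : List ℕ} (hw : IsStirlingOn s (m + 1) n (u ++ v))
    (hmn : m ≤ n) : IsStirlingOn s m n (u ++ List.replicate (s m) m ++ v) := by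
  have hm : m ∉ u ∧ m ∉ v := by
    rw [← not_or, ← List.mem_append]
    exact fun h => by have := hw.1 m h; omega
  refine ⟨fun x hx => ?_, fun i hi hin => ?_,
    hw.2.2.append_replicate_append _ fun x hx => (hw.1 x hx).1⟩
  · have : x ∈ u ++ v ∨ x = m := by simp only [List.mem_append, List.mem_replicate] at hx ⊢; tauto
    rcases this with hx | rfl
    · have := hw.1 x hx; omega
    · omega
  · rcases hi.eq_or_lt with rfl | hi
    · simp [List.count_eq_zero_of_not_mem, hm]
    · have := hw.2.1 i hi hin
      simp only [List.count_append, List.count_replicate] at this ⊢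
      simpa [hi.ne] using this

end

theorem eq_of_greaterBefore_eq {s : ℕ → ℕ} {m n : ℕ} {w w' : List ℕ}
    (hs : ∀ a, m ≤ a → a ≤ n → 1 ≤ s a)
    (hw : IsStirlingOn s m n w) (hw' : IsStirlingOn s m n w')
    (h : ∀ a, m ≤ a → a ≤ n → greaterBefore w a = greaterBefore w' a) : w = w' := by
  rcases lt_or_ge n m with hnm | hmn
  · rw [hw.eq_nil_of_lt hnm, hw'.eq_nil_of_lt hnm]
  have hsm : s m ≠ 0 := by have := hs m le_rfl hmn; omega
  obtain ⟨u, v, rfl, huv⟩ := hw.exists_eq_append_replicate_append hmn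
  obtain ⟨u', v', rfl, huv'⟩ := hw'.exists_eq_append_replicate_append hmn
  have hlen : u.length = u'.length := by
    simpa only [greaterBefore_append_replicate_append_self _
        (fun x hx => (huv.1 x (List.mem_append_left v hx)).1) hsm,
      greaterBefore_append_replicate_append_self _
        (fun x hx => (huv'.1 x (List.mem_append_left v' hx)).1) hsm] using h m le_rfl hmn
  have hrest : u ++ v = u' ++ v' :=
    eq_of_greaterBefore_eq (fun a ha han => hs a (by omega) han) huv huv' fun a ha han => by
      simpa only [greaterBefore_append_replicate_append_of_lt _ _ _ ha] using h a (by omega) han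
  obtain ⟨rfl, rfl⟩ := List.append_inj hrest hlen
  rfl
termination_by n + 1 - m

theorem exists_greaterBefore_eq {s : ℕ → ℕ} {m n : ℕ} {f : ℕ → ℕ}
    (hs : ∀ a, m ≤ a → a ≤ n → 1 ≤ s a)
    (hf : ∀ a, m ≤ a → a ≤ n → f a ≤ ∑ r ∈ Icc (a + 1) n, s r) :
    ∃ w, IsStirlingOn s m n w ∧ ∀ a, m ≤ a → a ≤ n → greaterBefore w a = f a := by
  rcases lt_or_ge n m with hnm | hmn
  · exact ⟨[], ⟨by simp, fun i hi hin => by omega, avoids121_iff.2 fun i j _ h => by simp at h⟩,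
      fun a ha han => by omega⟩
  have hsm : s m ≠ 0 := by have := hs m le_rfl hmn; omega
  obtain ⟨w₀, hw₀, hf₀⟩ := exists_greaterBefore_eq (m := m + 1)
    (fun a ha han => hs a (by omega) han) (fun a ha han => hf a (by omega) han)
  have hlen : f m ≤ w₀.length := hw₀.length_eq ▸ hf m le_rfl hmn
  refine ⟨w₀.take (f m) ++ List.replicate (s m) m ++ w₀.drop (f m),
    append_replicate_append (by rwa [List.take_append_drop]) hmn, fun a ha han => ?_⟩
  rcases ha.eq_or_lt with rfl | ha
  · rw [greaterBefore_append_replicate_append_self _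
      (fun x hx => (hw₀.1 x (List.mem_of_mem_take hx)).1) hsm, List.length_take, min_eq_left hlen]
  · rw [greaterBefore_append_replicate_append_of_lt _ _ _ ha, List.take_append_drop, hf₀ a ha han]
termination_by n + 1 - m

end IsStirlingOn

/-- For a composition `s` of positive integers, the map
sending a Stirling `s`-permutation `w` to the tuple `(f₁, …, f_{n-1})`, where
`f_i` is the number of letters strictly greater than `i` occurring before the
`i`-block of `w` (i.e. before the first occurrence of `i`), is a bijection onto
the set of tuples with `0 ≤ f_i ≤ s_n + s_{n-1} + ⋯ + s_{i+1}` for all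
`i ∈ {1, …, n-1}`.  (Here the `i`-th coordinate, for `i : Fin (n-1)`,
corresponds to the letter `i+1`.) -/
theorem stirling_bij_tuples (n : ℕ) (s : ℕ → ℕ)
    (hs : ∀ i, 1 ≤ i → i ≤ n → 1 ≤ s i) :
    Set.BijOn
      (fun w : {w : List ℕ // IsStirling s n w} => fun i : Fin (n - 1) =>
        ((w.1.takeWhile (fun x => decide (x ≠ (i : ℕ) + 1))).filter
          (fun x => decide ((i : ℕ) + 1 < x))).length)
      Set.univ
      {f : Fin (n - 1) → ℕ | ∀ i : Fin (n - 1),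
        f i ≤ ∑ r ∈ Finset.Icc ((i : ℕ) + 2) n, s r} := by
  have hlast (w : {w : List ℕ // IsStirling s n w}) (hn : 1 ≤ n) : greaterBefore w.1 n = 0 := by
    simpa using (isStirling_iff_isStirlingOn.1 w.2).greaterBefore_le hn
  refine ⟨fun w _ i => (isStirling_iff_isStirlingOn.1 w.2).greaterBefore_le (a := i + 1) (by omega),
    fun w _ w' _ h => ?_, fun f hf => ?_⟩
  · refine Subtype.ext <| IsStirlingOn.eq_of_greaterBefore_eq hs w.2 w'.2 fun a ha han => ?_
    rcases han.lt_or_eq with han | rfl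
    · have := congrFun h ⟨a - 1, by omega⟩
      simp only [Nat.sub_add_cancel ha] at this
      exact this
    · rw [hlast w ha, hlast w' ha]
  · obtain ⟨w, hw, hwf⟩ := IsStirlingOn.exists_greaterBefore_eq hs
      (f := fun a => if h : a - 1 < n - 1 then f ⟨a - 1, h⟩ else 0) fun a ha han => by
        split_ifs with h
        · simpa [Nat.sub_add_cancel ha, show a - 1 + 2 = a + 1 by omega] using hf ⟨a - 1, h⟩
        · exact Nat.zero_le _
    refine ⟨⟨w, hw⟩, trivial, funext fun i => ?_⟩
    exact (hwf (i + 1) (by omega) (by omega)).trans (by simp)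

end SPermutahedron
end

section
/- Let s be a composition of positive integers. A route R(k, t, δ) of the s-oruga graph is a vertex of the simplex Δ_w for a Stirling s-permutation w if and only if the inversion multiset of w satisfies: (1) #_w(k,i) ≥ t for all i < k with δ_i = 0; (2) #_w(k,i) ≤ t for all i < k with δ_i = 1; (3) #_w(j,i) = 0 for all i < j < k with (δ_i, δ_j) = (1,0); (4) #_w(j,i) = s_j for all i < j < k with (δ_i, δ_j) = (0,1). -/
namespace SPermutahedron

/-! ### The `s`-oruga graph, its routes, framing and coherence

The `s`-oruga graph `G(s)` (with the convention `s (n+1) = 2`) has vertices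
`v₋₁, v₀, …, vₙ`; for `i ∈ [1, n+1]` there are `s i - 1` source-edges
`(v₋₁, v_{n+1-i})` labeled `e^i_1, …, e^i_{s i - 1}`, and for `i ∈ [1, n]`
two edges `(v_{n-i}, v_{n+1-i})`, the bump `e^i_0` and the dip `e^i_{s i}`.
A route of `G(s)` is encoded by `(k, t, δ)`: it starts with the source-edge
`e^k_t` landing at `v_{n+1-k}` and then follows the bumps/dips
`e^j_{δ_j · s_j}` for `j = k-1, …, 1`. -/

/-- A route of the `s`-oruga graph, encoded by its landing level `k`, the
index `t` of its source-edge, and the bump/dip indicator `δ`. -/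
structure Route where
  k : ℕ
  t : ℕ
  δ : ℕ → Bool

/-- The extension of `s` with `s (n+1) = 2`. -/
def sExt (s : ℕ → ℕ) (n i : ℕ) : ℕ := if i = n + 1 then 2 else s i

/-- Validity of the data `(k, t, δ)` as a route of `G(s)`: `1 ≤ k ≤ n+1`,
`1 ≤ t ≤ s k - 1`, and `δ` is normalized to `false` outside `[1, k-1]`. -/
def IsRoute (s : ℕ → ℕ) (n : ℕ) (R : Route) : Prop :=
  1 ≤ R.k ∧ R.k ≤ n + 1 ∧ 1 ≤ R.t ∧ R.t + 1 ≤ sExt s n R.k ∧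
  ∀ i, i = 0 ∨ R.k ≤ i → R.δ i = false

/-- The index (in the framing order `e^i_0 ≺ e^i_1 ≺ ⋯ ≺ e^i_{s i}`) of the
incoming edge of route `R` at the vertex `v_{n+1-i}`. -/
def inLabel (s : ℕ → ℕ) (n : ℕ) (R : Route) (i : ℕ) : ℕ :=
  if i = R.k then R.t else if R.δ i then sExt s n i else 0

/-- The prefix of `R` ending at `v_{n+1-p}` is strictly smaller than that of
`R'` in the framing order: at the first vertex after which the two prefixes
coincide (i.e. at the smallest level `ℓ ≥ p` where they diverge), the incoming
edge of `R` precedes that of `R'`. -/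
def PrefLT (s : ℕ → ℕ) (n : ℕ) (R R' : Route) (p : ℕ) : Prop :=
  ∃ ℓ, p ≤ ℓ ∧ inLabel s n R ℓ < inLabel s n R' ℓ ∧
    ∀ m, p ≤ m → m < ℓ → inLabel s n R m = inLabel s n R' m

/-- The suffix of `R` starting at `v_{n+1-q}` is strictly smaller than that of
`R'` in the framing order `e^ℓ_0 ≺ e^ℓ_{s ℓ}`: at the last vertex before which
the suffixes coincide, `R` takes the bump and `R'` the dip. -/
def SufLT (R R' : Route) (q : ℕ) : Prop :=
  ∃ ℓ, 1 ≤ ℓ ∧ ℓ < q ∧ R.δ ℓ = false ∧ R'.δ ℓ = true ∧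
    ∀ m, ℓ < m → m < q → R.δ m = R'.δ m

/-- `[v_{n+1-p}, v_{n+1-q}]` is a common subroute of `R` and `R'` (the edges
strictly between coincide). -/
def CommonSub (s : ℕ → ℕ) (n : ℕ) (R R' : Route) (p q : ℕ) : Prop :=
  1 ≤ q ∧ q ≤ p ∧ p ≤ min R.k R'.k ∧
  ∀ ℓ, q ≤ ℓ → ℓ < p → inLabel s n R ℓ = inLabel s n R' ℓ

/-- `R` and `R'` are in conflict at the common subroute `[v_{n+1-p}, v_{n+1-q}]`:
their prefixes at `v_{n+1-p}` and suffixes at `v_{n+1-q}` are ordered oppositely. -/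
def ConflictAt (s : ℕ → ℕ) (n : ℕ) (R R' : Route) (p q : ℕ) : Prop :=
  CommonSub s n R R' p q ∧
  ((PrefLT s n R R' p ∧ SufLT R' R q) ∨ (PrefLT s n R' R p ∧ SufLT R R' q))

/-- `R` and `R'` are coherent: they are in conflict at no common subroute. -/
def Coherent (s : ℕ → ℕ) (n : ℕ) (R R' : Route) : Prop :=
  ∀ p q, ¬ ConflictAt s n R R' p q

/-- A clique of mutually coherent routes of the framed graph `(G(s), ⪯)`. -/
def IsClique (s : ℕ → ℕ) (n : ℕ) (C : Set Route) : Prop :=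
  (∀ R ∈ C, IsRoute s n R) ∧ ∀ R ∈ C, ∀ R' ∈ C, Coherent s n R R'

/-- A maximal clique of mutually coherent routes; by the theorem of
Danilov–Karzanov–Koshevoy these index the maximal simplices of the DKK
triangulation of the flow polytope of `(G(s), ⪯)`. -/
def IsMaxClique (s : ℕ → ℕ) (n : ℕ) (C : Set Route) : Prop :=
  IsClique s n C ∧ ∀ C', IsClique s n C' → C ⊆ C' → C' = C

/-- The route `R(u)` associated to a prefix `u` of a Stirling `s`-permutation:
with `t_a` the number of occurrences of `a` in `u`, and `c` the smallest value
with `0 < t_c < s c` (or `c = n+1`, `t = 1` if there is none), it is the route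
`(e^c_{t_c}, e^{c-1}_{t_{c-1}}, …, e^1_{t_1})`. -/
def routeOfPrefix (s : ℕ → ℕ) (n : ℕ) (u : List ℕ) : Route :=
  match (List.range' 1 n).find? (fun c => decide (0 < u.count c ∧ u.count c < s c)) with
  | some c => ⟨c, u.count c, fun i => decide (1 ≤ i ∧ i < c ∧ u.count i = s i)⟩
  | none => ⟨n + 1, 1, fun i => decide (1 ≤ i ∧ i ≤ n ∧ u.count i = s i)⟩

/-- The simplex (clique) `Δ_w` of the DKK triangulation associated to a
Stirling `s`-permutation `w`: the set of routes of the prefixes of `w`. -/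
def DeltaW (s : ℕ → ℕ) (n : ℕ) (w : List ℕ) : Set Route :=
  {R | ∃ i, i ≤ w.length ∧ R = routeOfPrefix s n (w.take i)}

/-- The inversion multiplicity extended to the virtual letter `n+1` (of which
one of its two copies is thought of as preceding the whole word), so that
`#_w(n+1, a) = 1` for every letter `a`. -/
def invWx (n : ℕ) (w : List ℕ) (c a : ℕ) : ℕ :=
  if c = n + 1 then 1 else invW w c a

/-!
A prefix `u` of `w` produces the route `(k, t, δ)` exactly when it contains `t` copies of `k`,
all copies of every `i < k` with `δ i`, and no other letter `i < k` (`RouteCounts`). As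
`#_w(c, a)` counts the `c`'s in the longest `a`-free prefix of `w`, comparing such a `u` with
these prefixes gives (1)–(4). Conversely, take the longest prefix `u` with at most `t` copies
of `k` and no letter `i < k` with `¬δ i`. The next letter of `w` is a further `k` or such a
forbidden letter; conditions (1)–(4), with `121`-avoidance for the case where the new letter
would sit inside an unfinished block, show that this can only happen once `u` holds `t`
copies of `k` and has finished every `i < k` with `δ i`.
-/

end SPermutahedron

namespace List

variable {α : Type*} [DecidableEq α]

theorem count_take_succ_le (l : List α) (m : ℕ) (a : α) :
    (l.take (m + 1)).count a ≤ (l.take m).count a + 1 := by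
  rw [take_add_one, count_append]
  have : l[m]?.toList.count a ≤ 1 := count_le_length.trans Option.length_toList_le
  omega

theorem count_take_succ_eq_of_count_lt {l : List α} {m : ℕ} {a : α} (b : α) (hba : b ≠ a)
    (h : (l.take m).count a < (l.take (m + 1)).count a) :
    (l.take (m + 1)).count b = (l.take m).count b := by
  rw [take_add_one, count_append] at *
  cases hm : l[m]? with
  | none => simp [hm] at h
  | some x =>
    obtain rfl : x = a := by
      by_contra hxa
      simp [hm, hxa] at h
    simp [hba.symm]

theorem prefix_takeWhile_append_of_not_mem {a : α} {u : List α} (h : a ∉ u) (v : List α) :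
    u <+: (u ++ v).takeWhile (fun x => decide (x ≠ a)) := by
  rw [takeWhile_append_of_pos (fun x hx => by simpa using ne_of_mem_of_not_mem hx h)]
  exact prefix_append _ _

theorem takeWhile_append_prefix_of_mem {a : α} {u : List α} (h : a ∈ u) (v : List α) :
    (u ++ v).takeWhile (fun x => decide (x ≠ a)) <+: u := by
  rw [takeWhile_append, if_neg]
  · exact takeWhile_prefix _
  · intro hlen
    rw [← (takeWhile_prefix _).eq_of_length hlen] at h
    simpa using mem_takeWhile_imp h

end List

namespace SPermutahedron

open List

theorem count_take_le_invW {w : List ℕ} {m a : ℕ} (h : (w.take m).count a = 0) (c : ℕ) :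
    (w.take m).count c ≤ invW w c a := by
  have := (prefix_takeWhile_append_of_not_mem (count_eq_zero.mp h) (w.drop m)).sublist.count_le c
  rwa [take_append_drop] at this

theorem invW_le_count_take {w : List ℕ} {m a : ℕ} (h : 0 < (w.take m).count a) (c : ℕ) :
    invW w c a ≤ (w.take m).count c := by
  have := (takeWhile_append_prefix_of_mem (count_pos_iff.mp h) (w.drop m)).sublist.count_le c
  rwa [take_append_drop] at this

theorem invW_le_count (w : List ℕ) (c a : ℕ) : invW w c a ≤ w.count c :=
  (takeWhile_prefix _).sublist.count_le c

theorem invWx_of_le {n : ℕ} {w : List ℕ} {c : ℕ} (hc : c ≤ n) (a : ℕ) :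
    invWx n w c a = invW w c a :=
  if_neg (by omega)

theorem invW_eq_zero_of_not_mem {w : List ℕ} {c : ℕ} (hc : c ∉ w) (a : ℕ) : invW w c a = 0 :=
  Nat.eq_zero_of_le_zero (count_eq_zero.mpr hc ▸ invW_le_count w c a)

theorem Avoids121.count_take_eq_count {w : List ℕ} (hav : Avoids121 w) {i j p q : ℕ}
    (hij : i < j) (hi : 0 < (w.take p).count i)
    (hj : (w.take p).count j < (w.take q).count j) :
    (w.take q).count i = w.count i := by
  have hpq : p ≤ q := by
    by_contra! hqp
    have := (take_sublist_take_left (l := w) hqp.le).count_le j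
    omega
  have hsplit : w.take p ++ (w.take q).drop p = w.take q := by
    simpa [take_take, min_eq_left hpq] using take_append_drop p (w.take q)
  have hmid : j ∈ (w.take q).drop p := by
    have := congrArg (count j) hsplit
    rw [count_append] at this
    exact count_pos_iff.mp (by omega)
  by_contra hne
  have hlast : i ∈ w.drop q := by
    have h1 := congrArg (count i) (take_append_drop q w)
    have h2 := (take_sublist q w).count_le i
    rw [count_append] at h1
    exact count_pos_iff.mp (by omega)
  obtain ⟨u₁, u₂, hu⟩ := append_of_mem (count_pos_iff.mp hi)
  obtain ⟨v₁, v₂, hv⟩ := append_of_mem hmid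
  obtain ⟨x₁, x₂, hx⟩ := append_of_mem hlast
  refine hav ⟨u₁, u₂ ++ v₁, v₂ ++ x₁, x₂, i, j, hij, ?_⟩
  rw [← take_append_drop q w, ← hsplit, hu, hv, hx]
  simp

theorem IsRoute.t_lt {s : ℕ → ℕ} {n k t : ℕ} {δ : ℕ → Bool} (hR : IsRoute s n ⟨k, t, δ⟩)
    (hk : k ≤ n) : t < s k := by
  have hts : t + 1 ≤ sExt s n k := hR.2.2.2.1
  rw [sExt, if_neg (by omega)] at hts
  omega

theorem IsRoute.t_eq_one {s : ℕ → ℕ} {n k t : ℕ} {δ : ℕ → Bool} (hR : IsRoute s n ⟨k, t, δ⟩)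
    (hk : ¬k ≤ n) : t = 1 := by
  have hkn : k ≤ n + 1 := hR.2.1
  have ht : 1 ≤ t := hR.2.2.1
  have hts : t + 1 ≤ sExt s n k := hR.2.2.2.1
  rw [sExt, if_pos (by omega)] at hts
  omega

def RouteCounts (s : ℕ → ℕ) (n : ℕ) (R : Route) (u : List ℕ) : Prop :=
  (R.k ≤ n → u.count R.k = R.t) ∧
    ∀ i, 1 ≤ i → i < R.k → u.count i = if R.δ i then s i else 0

section RouteOfPrefix

variable {s : ℕ → ℕ} {n : ℕ} {u : List ℕ}

variable (s n u) in
theorem exists_routeOfPrefix_eq :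
    ∃ c, 1 ≤ c ∧ c ≤ n + 1 ∧ (c ≤ n → 0 < u.count c ∧ u.count c < s c) ∧
      (∀ i, 1 ≤ i → i < c → ¬(0 < u.count i ∧ u.count i < s i)) ∧
      routeOfPrefix s n u = ⟨c, if c ≤ n then u.count c else 1,
        fun i => decide (1 ≤ i ∧ i < c ∧ u.count i = s i)⟩ := by
  unfold routeOfPrefix
  split
  case h_1 c hc =>
    simp only [find?_range'_eq_some, mem_range'_1, decide_eq_true_eq, Bool.not_eq_true',
      decide_eq_false_iff_not] at hc
    obtain ⟨hopen, hc, hmin⟩ := hc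
    exact ⟨c, hc.1, by omega, fun _ => hopen, hmin, by rw [if_pos (by omega)]⟩
  case h_2 hc =>
    simp only [find?_range'_eq_none, Bool.not_eq_true', decide_eq_false_iff_not] at hc
    refine ⟨n + 1, by omega, le_rfl, by omega, fun i hi hin => hc i hi (by omega), ?_⟩
    simp only [Nat.lt_succ_iff, if_neg (Nat.not_succ_le_self n)]

theorem routeCounts_routeOfPrefix (hu : ∀ i, 1 ≤ i → i ≤ n → u.count i ≤ s i) :
    RouteCounts s n (routeOfPrefix s n u) u := by
  obtain ⟨c, -, hcn, -, hmin, heq⟩ := exists_routeOfPrefix_eq s n u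
  rw [heq, RouteCounts]
  dsimp only
  refine ⟨fun hc => (if_pos hc).symm, fun i hi hic => ?_⟩
  have hclosed := hmin i hi hic
  have hle := hu i hi (by omega)
  by_cases hfull : u.count i = s i
  · simp [hi, hic, hfull]
  · simp only [hfull, and_false, decide_false, Bool.false_eq_true, if_false]
    omega

theorem routeOfPrefix_eq_iff (hs : ∀ i, 1 ≤ i → i ≤ n → 1 ≤ s i)
    (hu : ∀ i, 1 ≤ i → i ≤ n → u.count i ≤ s i) {R : Route} (hR : IsRoute s n R) :
    routeOfPrefix s n u = R ↔ RouteCounts s n R u := by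
  refine ⟨fun h => h ▸ routeCounts_routeOfPrefix hu, fun ⟨hk, hlow⟩ => ?_⟩
  obtain ⟨k, t, δ⟩ := R
  dsimp only at hk hlow
  have hk1 : 1 ≤ k := hR.1
  have hkn : k ≤ n + 1 := hR.2.1
  have ht1 : 1 ≤ t := hR.2.2.1
  have hδ : ∀ i, i = 0 ∨ k ≤ i → δ i = false := hR.2.2.2.2
  obtain ⟨c, hc1, hcn, hopen, hmin, heq⟩ := exists_routeOfPrefix_eq s n u
  obtain rfl : c = k := by
    by_contra hne
    rcases lt_or_gt_of_ne hne with hlt | hlt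
    · have hclosed := hlow c hc1 hlt
      have := hopen (by omega)
      split_ifs at hclosed <;> omega
    · exact hmin k hk1 hlt ⟨by omega, by have := hR.t_lt (by omega); omega⟩
  rw [heq, Route.mk.injEq]
  refine ⟨rfl, ?_, funext fun i => ?_⟩
  · split_ifs with hc
    exacts [hk hc, (hR.t_eq_one hc).symm]
  · by_cases hi : 1 ≤ i ∧ i < c
    · have hcount := hlow i hi.1 hi.2
      have := hs i hi.1 (by omega)
      cases hδi : δ i <;> simp only [hδi, if_true, if_false, Bool.false_eq_true] at hcount
      · simp only [decide_eq_false_iff_not, hcount]; omega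
      · simpa [hcount] using hi
    · rw [hδ i (by omega)]
      simp only [decide_eq_false_iff_not]
      omega

theorem mem_DeltaW_iff {w : List ℕ} (hs : ∀ i, 1 ≤ i → i ≤ n → 1 ≤ s i)
    (hwc : ∀ i, 1 ≤ i → i ≤ n → w.count i = s i) {R : Route} (hR : IsRoute s n R) :
    R ∈ DeltaW s n w ↔ ∃ m ≤ w.length, RouteCounts s n R (w.take m) := by
  refine exists_congr fun m => and_congr_right fun _ => ?_
  have hu : ∀ i, 1 ≤ i → i ≤ n → (w.take m).count i ≤ s i :=
    fun i hi hin => hwc i hi hin ▸ (take_sublist m w).count_le i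
  rw [eq_comm, routeOfPrefix_eq_iff hs hu hR]

end RouteOfPrefix

theorem inversions_of_routeCounts {s : ℕ → ℕ} {n : ℕ} {w : List ℕ} {k t m : ℕ} {δ : ℕ → Bool}
    (hs : ∀ i, 1 ≤ i → i ≤ n → 1 ≤ s i) (hwc : ∀ i, 1 ≤ i → i ≤ n → w.count i = s i)
    (hR : IsRoute s n ⟨k, t, δ⟩) (h : RouteCounts s n ⟨k, t, δ⟩ (w.take m)) :
    (∀ i, 1 ≤ i → i < k → δ i = false → t ≤ invWx n w k i) ∧
      (∀ i, 1 ≤ i → i < k → δ i = true → invWx n w k i ≤ t) ∧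
      (∀ i j, 1 ≤ i → i < j → j < k → δ i = true → δ j = false → invW w j i = 0) ∧
      (∀ i j, 1 ≤ i → i < j → j < k → δ i = false → δ j = true → invW w j i = s j) := by
  obtain ⟨hk, hlow⟩ := h
  dsimp only at hk hlow
  have hkn : k ≤ n + 1 := hR.2.1
  have absent : ∀ i, 1 ≤ i → i < k → δ i = false → (w.take m).count i = 0 :=
    fun i hi hik hδ => by simpa [hδ] using hlow i hi hik
  have full : ∀ i, 1 ≤ i → i < k → δ i = true → (w.take m).count i = s i :=
    fun i hi hik hδ => by simpa [hδ] using hlow i hi hik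
  have present : ∀ i, 1 ≤ i → i < k → δ i = true → 0 < (w.take m).count i :=
    fun i hi hik hδ => full i hi hik hδ ▸ hs i hi (by omega)
  refine ⟨fun i hi hik hδ => ?_, fun i hi hik hδ => ?_, fun i j hi hij hjk hδi hδj => ?_,
    fun i j hi hij hjk hδi hδj => ?_⟩
  · by_cases hk' : k ≤ n
    · rw [invWx_of_le hk', ← hk hk']
      exact count_take_le_invW (absent i hi hik hδ) k
    · rw [invWx, if_pos (by omega), hR.t_eq_one hk']
  · by_cases hk' : k ≤ n
    · rw [invWx_of_le hk', ← hk hk']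
      exact invW_le_count_take (present i hi hik hδ) k
    · rw [invWx, if_pos (by omega), hR.t_eq_one hk']
  · have := invW_le_count_take (present i hi (by omega) hδi) j
    rw [absent j (by omega) hjk hδj] at this
    omega
  · have hle := count_take_le_invW (absent i hi (by omega) hδi) j
    have hge := invW_le_count w j i
    rw [full j (by omega) hjk hδj] at hle
    rw [hwc j (by omega) (by omega)] at hge
    omega

def StaysBelow (k t : ℕ) (δ : ℕ → Bool) (u : List ℕ) : Prop :=
  u.count k ≤ t ∧ ∀ i, 1 ≤ i → i < k → δ i = false → u.count i = 0

section LongestPrefix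

variable {w : List ℕ} {k t m : ℕ} {δ : ℕ → Bool}

theorem Avoids121.count_take_succ_le_invW (hav : Avoids121 w) {i x : ℕ} (hix : i < x)
    (hx : (w.take m).count x < (w.take (m + 1)).count x)
    (hi : (w.take (m + 1)).count i < w.count i) :
    (w.take (m + 1)).count x ≤ invW w x i := by
  have hsame := count_take_succ_eq_of_count_lt i hix.ne hx
  rcases Nat.eq_zero_or_pos ((w.take m).count i) with h0 | hpos
  · exact count_take_le_invW (hsame.trans h0) x
  · exact absurd (hav.count_take_eq_count hix hpos hx) hi.ne

theorem count_take_eq_of_maximal (hwk : t < w.count k)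
    (h1 : ∀ i, 1 ≤ i → i < k → δ i = false → t ≤ invW w k i)
    (hm : StaysBelow k t δ (w.take m))
    (hmax : m < w.length → ¬StaysBelow k t δ (w.take (m + 1))) :
    (w.take m).count k = t := by
  by_contra hne
  have hlt : (w.take m).count k < t := lt_of_le_of_ne hm.1 hne
  have hlen : m < w.length := by
    by_contra! h
    rw [take_of_length_le h] at hlt
    omega
  refine hmax hlen ⟨by have := count_take_succ_le w m k; omega, fun i hi hik hδi => ?_⟩
  by_contra hpos
  have hx : (w.take m).count i < (w.take (m + 1)).count i := by
    rw [hm.2 i hi hik hδi]; omega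
  have hsame := count_take_succ_eq_of_count_lt k (by omega) hx
  have := invW_le_count_take (Nat.pos_of_ne_zero hpos) k
  have := h1 i hi hik hδi
  omega

theorem count_take_eq_count_of_maximal (hav : Avoids121 w) {i : ℕ} (hik : i < k)
    (hδi : δ i = true) (h2 : invW w k i ≤ t)
    (h3 : ∀ j, i < j → j < k → δ j = false → invW w j i = 0)
    (h4 : ∀ j, 1 ≤ j → j < i → δ j = false → invW w i j = w.count i)
    (hm : StaysBelow k t δ (w.take m))
    (hmax : m < w.length → ¬StaysBelow k t δ (w.take (m + 1))) :
    (w.take m).count i = w.count i := by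
  by_contra hne
  have hlt : (w.take m).count i < w.count i :=
    lt_of_le_of_ne ((take_sublist m w).count_le i) hne
  have hlen : m < w.length := by
    by_contra! h
    rw [take_of_length_le h] at hlt
    omega
  by_cases hk : t < (w.take (m + 1)).count k
  · have hx : (w.take m).count k < (w.take (m + 1)).count k := by have := hm.1; omega
    have hi := count_take_succ_eq_of_count_lt i hik.ne hx
    have := hav.count_take_succ_le_invW hik hx (by omega)
    omega
  · obtain ⟨j, hj, hjk, hδj, hj0⟩ : ∃ j, 1 ≤ j ∧ j < k ∧ δ j = false ∧
        (w.take (m + 1)).count j ≠ 0 := by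
      by_contra! hall
      exact hmax hlen ⟨by omega, hall⟩
    have hx : (w.take m).count j < (w.take (m + 1)).count j := by
      rw [hm.2 j hj hjk hδj]; omega
    have hij : i ≠ j := by rintro rfl; simp [hδi] at hδj
    have hi := count_take_succ_eq_of_count_lt i hij hx
    rcases lt_or_gt_of_ne hij with hij | hji
    · have := hav.count_take_succ_le_invW hij hx (by omega)
      rw [h3 j hij hjk hδj] at this
      omega
    · have := invW_le_count_take (Nat.pos_of_ne_zero hj0) i
      rw [h4 j hj hji hδj] at this
      omega

end LongestPrefix

theorem exists_routeCounts_of_inversions {s : ℕ → ℕ} {n : ℕ} {w : List ℕ} {k t : ℕ}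
    {δ : ℕ → Bool} (hw : IsStirling s n w) (hR : IsRoute s n ⟨k, t, δ⟩)
    (h1 : ∀ i, 1 ≤ i → i < k → δ i = false → t ≤ invWx n w k i)
    (h2 : ∀ i, 1 ≤ i → i < k → δ i = true → invWx n w k i ≤ t)
    (h3 : ∀ i j, 1 ≤ i → i < j → j < k → δ i = true → δ j = false → invW w j i = 0)
    (h4 : ∀ i j, 1 ≤ i → i < j → j < k → δ i = false → δ j = true → invW w j i = s j) :
    ∃ m ≤ w.length, RouteCounts s n ⟨k, t, δ⟩ (w.take m) := by
  classical
  obtain ⟨hmem, hwc, hav⟩ := hw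
  have hkn : k ≤ n + 1 := hR.2.1
  obtain ⟨m, hmle, hm, hmax⟩ : ∃ m ≤ w.length, StaysBelow k t δ (w.take m) ∧
      (m < w.length → ¬StaysBelow k t δ (w.take (m + 1))) :=
    let P m := StaysBelow k t δ (w.take m)
    ⟨Nat.findGreatest P w.length, Nat.findGreatest_le _,
      Nat.findGreatest_spec (P := P) (Nat.zero_le _) ⟨by simp, by simp⟩,
      fun h => Nat.findGreatest_is_greatest (Nat.lt_succ_self _) h⟩
  refine ⟨m, hmle, ?_⟩
  dsimp only [RouteCounts]
  refine ⟨fun hk => ?_, fun i hi hik => ?_⟩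
  · refine count_take_eq_of_maximal (hwc k hR.1 hk ▸ hR.t_lt hk) (fun i hi hik hδi => ?_) hm hmax
    simpa [invWx_of_le hk] using h1 i hi hik hδi
  by_cases hδi : δ i = true
  swap
  · rw [if_neg hδi]
    exact hm.2 i hi hik (by simpa using hδi)
  · have h2' : invW w k i ≤ t := by
      by_cases hk : k ≤ n
      · simpa [invWx_of_le hk] using h2 i hi hik hδi
      · rw [invW_eq_zero_of_not_mem (fun h => by have := hmem k h; omega)]
        exact Nat.zero_le t
    have h4' : ∀ j, 1 ≤ j → j < i → δ j = false → invW w i j = w.count i :=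
      fun j hj hji hδj => by rw [h4 j i hj hji hik hδj hδi, hwc i hi (by omega)]
    rw [if_pos hδi, ← hwc i hi (by omega)]
    exact count_take_eq_count_of_maximal hav hik hδi h2'
      (fun j hij hjk hδj => h3 i j hi hij hjk hδi hδj) h4' hm hmax

theorem route_mem_DeltaW_iff_general (n : ℕ) (s : ℕ → ℕ)
    (hs : ∀ i, 1 ≤ i → i ≤ n → 1 ≤ s i)
    (w : List ℕ) (hw : IsStirling s n w)
    (k t : ℕ) (δ : ℕ → Bool)
    (hR : IsRoute s n ⟨k, t, δ⟩) :
    (⟨k, t, δ⟩ : Route) ∈ DeltaW s n w ↔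
      ((∀ i, 1 ≤ i → i < k → δ i = false → t ≤ invWx n w k i) ∧
       (∀ i, 1 ≤ i → i < k → δ i = true → invWx n w k i ≤ t) ∧
       (∀ i j, 1 ≤ i → i < j → j < k → δ i = true → δ j = false → invW w j i = 0) ∧
       (∀ i j, 1 ≤ i → i < j → j < k → δ i = false → δ j = true → invW w j i = s j)) := by
  rw [mem_DeltaW_iff hs hw.2.1 hR]
  constructor
  · rintro ⟨m, -, hm⟩
    exact inversions_of_routeCounts hs hw.2.1 hR hm
  · rintro ⟨h1, h2, h3, h4⟩
    exact exists_routeCounts_of_inversions hw hR h1 h2 h3 h4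

/-- (Lemma 3.5 of the paper.) A route `R(k, t, δ)` of the
`s`-oruga graph is a vertex of the simplex `Δ_w`, for a Stirling
`s`-permutation `w`, if and only if the inversion multiset of `w` satisfies:
(1) `#_w(k,i) ≥ t` for all `i < k` with `δ_i = 0`;
(2) `#_w(k,i) ≤ t` for all `i < k` with `δ_i = 1`;
(3) `#_w(j,i) = 0` for all `i < j < k` with `(δ_i, δ_j) = (1, 0)`;
(4) `#_w(j,i) = s_j` for all `i < j < k` with `(δ_i, δ_j) = (0, 1)`. -/
theorem route_mem_DeltaW_iff (n : ℕ) (hn : 0 < n) (s : ℕ → ℕ)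
    (hs : ∀ i, 1 ≤ i → i ≤ n → 1 ≤ s i)
    (w : List ℕ) (hw : IsStirling s n w)
    (k t : ℕ) (δ : ℕ → Bool)
    (hR : IsRoute s n ⟨k, t, δ⟩) :
    (⟨k, t, δ⟩ : Route) ∈ DeltaW s n w ↔
      ((∀ i, 1 ≤ i → i < k → δ i = false → t ≤ invWx n w k i) ∧
       (∀ i, 1 ≤ i → i < k → δ i = true → invWx n w k i ≤ t) ∧
       (∀ i j, 1 ≤ i → i < j → j < k → δ i = true → δ j = false → invW w j i = 0) ∧
       (∀ i j, 1 ≤ i → i < j → j < k → δ i = false → δ j = true → invW w j i = s j)) :=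
  route_mem_DeltaW_iff_general n s hs w hw k t δ hR

end SPermutahedron
end

section
/- Let s be a composition of positive integers. The h-polynomial of the combinatorial s-permutahedron equals the s-order Eulerian polynomial A_s(x) = ∑_k |W_s(k)| x^k, where W_s(k) is the set of Stirling s-permutations with exactly k descents. Equivalently, ∑_{w} (1+x)^{asc(w)} = A_s(x+1), where asc(w) is the number of ascents of w and the sum is over all Stirling s-permutations w. -/
namespace SPermutahedron

open Classical in
/-- The (finite) set of all Stirling `s`-permutations: the `121`-avoiding
permutations of the word `1^{s 1} 2^{s 2} ⋯ n^{s n}`. -/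
noncomputable def StirlingFinset (s : ℕ → ℕ) (n : ℕ) : Finset (List ℕ) :=
  (((List.range n).flatMap fun i => List.replicate (s (i + 1)) (i + 1)).permutations).toFinset.filter
    fun w => Avoids121 w

open Classical in
/-- The set of ascents of `w`: pairs `(a, c)` with `a < c` and `ac` a
consecutive substring of `w`. -/
noncomputable def AscFinset (n : ℕ) (w : List ℕ) : Finset (ℕ × ℕ) :=
  (Finset.Icc 1 n ×ˢ Finset.Icc 1 n).filter fun p => WordAscent w p.1 p.2

open Classical in
/-- The set of descents of `w`: pairs `(a, c)` with `a < c` and `ca` a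
consecutive substring of `w`. -/
noncomputable def DescFinset (n : ℕ) (w : List ℕ) : Finset (ℕ × ℕ) :=
  (Finset.Icc 1 n ×ˢ Finset.Icc 1 n).filter fun p => WordDescent w p.1 p.2

open Polynomial in
/-- The `s`-order Eulerian polynomial `A_s(x) = ∑_k |W_s(k)| x^k`, where
`W_s(k)` is the set of Stirling `s`-permutations with exactly `k` descents. -/
noncomputable def sEulerianPoly (s : ℕ → ℕ) (n : ℕ) : Polynomial ℤ :=
  ∑ k ∈ Finset.range ((∑ i ∈ Finset.Icc 1 n, s i) + 1),
    Polynomial.C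
      ((((StirlingFinset s n).filter fun w => (DescFinset n w).card = k).card : ℤ)) * X ^ k

/-! Summing over the subsets of the ascent set turns the `f`-polynomial into
`∑_w (1 + x)^{asc w}`. Reversal is an involution on Stirling `s`-permutations (the pattern `121`
is a palindrome) that exchanges ascents and descents, so this is `∑_w (1 + x)^{des w}`, which is
`A_s(x + 1)` once the words are grouped by their number of descents. -/

open Polynomial

theorem avoids121_reverse {w : List ℕ} (h : Avoids121 w) : Avoids121 w.reverse := by
  rintro ⟨u₁, u₂, u₃, u₄, i, j, hij, hw⟩
  refine h ⟨u₄.reverse, u₃.reverse, u₂.reverse, u₁.reverse, i, j, hij, ?_⟩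
  rw [← List.reverse_reverse w, hw]
  simp

theorem wordDescent_reverse_iff {w : List ℕ} {a c : ℕ} :
    WordDescent w.reverse a c ↔ WordAscent w a c := by
  refine and_congr_right fun _ => ⟨?_, ?_⟩
  · rintro ⟨u, v, hw⟩
    exact ⟨v.reverse, u.reverse, by rw [← List.reverse_reverse w, hw]; simp⟩
  · rintro ⟨u, v, rfl⟩
    exact ⟨v.reverse, u.reverse, by simp⟩

theorem descFinset_reverse (n : ℕ) (w : List ℕ) : DescFinset n w.reverse = AscFinset n w := by
  classical
  unfold DescFinset AscFinset
  exact Finset.filter_congr fun _ _ => wordDescent_reverse_iff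

theorem reverse_mem_stirlingFinset {s : ℕ → ℕ} {n : ℕ} {w : List ℕ}
    (h : w ∈ StirlingFinset s n) : w.reverse ∈ StirlingFinset s n := by
  simp only [StirlingFinset, Finset.mem_filter, List.mem_toFinset, List.mem_permutations] at h ⊢
  exact ⟨w.reverse_perm.trans h.1, avoids121_reverse h.2⟩

theorem length_of_mem_stirlingFinset {s : ℕ → ℕ} {n : ℕ} {w : List ℕ}
    (h : w ∈ StirlingFinset s n) : w.length = ∑ i ∈ Finset.Icc 1 n, s i := by
  simp only [StirlingFinset, Finset.mem_filter, List.mem_toFinset, List.mem_permutations] at h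
  rw [h.1.length_eq, List.length_flatMap]
  simp only [List.length_replicate]
  rw [← Multiset.sum_coe, ← Multiset.map_coe, ← Multiset.range, ← Finset.range_val,
    ← Finset.sum_eq_multiset_sum, Finset.range_eq_Ico, Finset.sum_Ico_add',
    Finset.Ico_add_one_right_eq_Icc, zero_add]

theorem card_descFinset_le_length (n : ℕ) (w : List ℕ) : (DescFinset n w).card ≤ w.length := by
  classical
  -- a descent is determined by the position at which it occurs
  have hsub : DescFinset n w ⊆ (Finset.range w.length).image
      fun k => ((w.drop k).getD 1 0, (w.drop k).getD 0 0) := by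
    intro p hp
    obtain ⟨-, -, u, v, hw⟩ := Finset.mem_filter.1 hp
    refine Finset.mem_image.2 ⟨u.length, ?_, ?_⟩
    · simp [hw]
    · rw [hw, List.drop_left]
      rfl
  calc (DescFinset n w).card ≤ _ := Finset.card_le_card hsub
    _ ≤ (Finset.range w.length).card := Finset.card_image_le
    _ = w.length := Finset.card_range _

theorem sum_card_ascFinset_eq_sum_card_descFinset {M : Type*} [AddCommMonoid M]
    (s : ℕ → ℕ) (n : ℕ) (g : ℕ → M) :
    ∑ w ∈ StirlingFinset s n, g (AscFinset n w).card =
      ∑ w ∈ StirlingFinset s n, g (DescFinset n w).card :=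
  Finset.sum_nbij' List.reverse List.reverse (fun _ => reverse_mem_stirlingFinset)
    (fun _ => reverse_mem_stirlingFinset) (fun w _ => w.reverse_reverse)
    (fun w _ => w.reverse_reverse) fun w _ => by rw [descFinset_reverse]

theorem sEulerianPoly_eq_sum (s : ℕ → ℕ) (n : ℕ) :
    sEulerianPoly s n = ∑ w ∈ StirlingFinset s n, (X : ℤ[X]) ^ (DescFinset n w).card := by
  have h_maps : ∀ w ∈ StirlingFinset s n,
      (DescFinset n w).card ∈ Finset.range ((∑ i ∈ Finset.Icc 1 n, s i) + 1) := fun w hw => by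
    rw [Finset.mem_range, Nat.lt_succ_iff, ← length_of_mem_stirlingFinset hw]
    exact card_descFinset_le_length n w
  rw [← Finset.sum_fiberwise_of_maps_to' h_maps]
  refine Finset.sum_congr rfl fun k _ => ?_
  rw [Finset.sum_const, nsmul_eq_mul, ← C_eq_natCast]

theorem _root_.Finset.sum_powerset_pow_card {R ι : Type*} [CommSemiring R] (x : R)
    (t : Finset ι) :
    ∑ A ∈ t.powerset, x ^ A.card = (x + 1) ^ t.card := by
  simpa using Finset.sum_pow_mul_eq_add_pow x 1 t

theorem h_polynomial_eq_sEulerian_general (n : ℕ) (s : ℕ → ℕ) :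
    (∑ w ∈ StirlingFinset s n, ∑ A ∈ (AscFinset n w).powerset,
        (X : Polynomial ℤ) ^ A.card) = (sEulerianPoly s n).comp (X + 1) ∧
    (∑ w ∈ StirlingFinset s n, ((1 : Polynomial ℤ) + X) ^ (AscFinset n w).card) =
      (sEulerianPoly s n).comp (X + 1) := by
  have h_asc : ∑ w ∈ StirlingFinset s n, ((1 : ℤ[X]) + X) ^ (AscFinset n w).card =
      (sEulerianPoly s n).comp (X + 1) := by
    rw [sum_card_ascFinset_eq_sum_card_descFinset, sEulerianPoly_eq_sum, sum_comp]
    simp only [pow_comp, X_comp, add_comm]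
  refine ⟨?_, h_asc⟩
  rw [← h_asc]
  simp_rw [Finset.sum_powerset_pow_card, add_comm]

open Polynomial in
/-- The `h`-polynomial of the combinatorial
`s`-permutahedron is the `s`-order Eulerian polynomial `A_s`.  The
`f`-polynomial is `f(x) = ∑_{(w,A)} x^{|A|}`, the sum running over faces
`(w, A)` (a Stirling `s`-permutation with a subset of its ascents), so the
defining relation `f(x) = h(x+1)` reads `f = A_s ∘ (X+1)`; equivalently
`∑_w (1+x)^{asc(w)} = A_s(x+1)`. -/
theorem h_polynomial_eq_sEulerian (n : ℕ) (s : ℕ → ℕ)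
    (hs : ∀ i, 1 ≤ i → i ≤ n → 1 ≤ s i) :
    (∑ w ∈ StirlingFinset s n, ∑ A ∈ (AscFinset n w).powerset,
        (X : Polynomial ℤ) ^ A.card) = (sEulerianPoly s n).comp (X + 1) ∧
    (∑ w ∈ StirlingFinset s n, ((1 : Polynomial ℤ) + X) ^ (AscFinset n w).card) =
      (sEulerianPoly s n).comp (X + 1) :=
  h_polynomial_eq_sEulerian_general n s

end SPermutahedron
end

section
/- Let s = (s_1,...,s_n) be a composition of positive integers and let d = (0, 0, s_n, s_{n-1}, ..., s_2, -∑_{i=2}^n s_i). The number of integer flows on the s-oruga graph G(s) with netflow d equals ∏_{i=1}^{n-1} (1 + s_{n-i+1} + s_{n-i+2} + ··· + s_n). Equivalently, an integer d-flow is uniquely determined by choices f_i ∈ {0, 1, ..., s_n + ··· + s_{i+1}} of flow on the bump edge e^i_0 for i = 1,...,n-1, with zero flow on all source-edges. -/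
namespace SPermutahedron

/-- An integer flow on the `s`-oruga graph `G(s)` with netflow
`d = (0, 0, sₙ, sₙ₋₁, …, s₂, -∑_{i=2}^n sᵢ)` (the entries being indexed by the
vertices `v₋₁, v₀, v₁, …, vₙ`).  Here `f i t` is the flow on the edge `e^i_t`:
the source-edges `(v₋₁, v_{n+1-i})` are `e^i_t` for `t ∈ [1, s i - 1]`
(with `s (n+1) = 2`), the bump is `e^i_0` and the dip `e^i_{s i}`, both going
from `v_{n-i}` to `v_{n+1-i}`, for `i ∈ [1, n]`; `f` is normalized to vanish
on non-edges.  The conjuncts are the conservation equations at the vertices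
`v₀`, `v_{n+1-i}` for `2 ≤ i ≤ n`, `vₙ` and `v₋₁`. -/
def IsIntDFlow (s : ℕ → ℕ) (n : ℕ) (f : ℕ → ℕ → ℕ) : Prop :=
  (∀ i t, (i = 0 ∨ n + 1 < i ∨ sExt s n i < t ∨ (i = n + 1 ∧ t ≠ 1)) → f i t = 0) ∧
  (f (n + 1) 1 = f n 0 + f n (s n)) ∧
  (∀ i, 2 ≤ i → i ≤ n →
    (∑ t ∈ Finset.range (s i + 1), f i t) + s i = f (i - 1) 0 + f (i - 1) (s (i - 1))) ∧
  ((∑ t ∈ Finset.range (s 1 + 1), f 1 t) = ∑ r ∈ Finset.Icc 2 n, s r) ∧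
  ((∑ i ∈ Finset.Icc 1 (n + 1), ∑ t ∈ Finset.Icc 1 (sExt s n i - 1), f i t) = 0)

/-- Total bump+dip flow at level `i`. -/
def Btot (s : ℕ → ℕ) (n i : ℕ) : ℕ := ∑ r ∈ Finset.Icc (i + 1) n, s r

lemma Btot_step (s : ℕ → ℕ) (n i : ℕ) (h1 : 1 ≤ i) (h2 : i ≤ n) :
    Btot s n (i - 1) = s i + Btot s n i := by
  have he : Finset.Icc (i - 1 + 1) n = insert i (Finset.Icc (i + 1) n) := by
    ext x; simp only [Finset.mem_Icc, Finset.mem_insert]; omega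
  rw [Btot, he, Finset.sum_insert (by simp only [Finset.mem_Icc]; omega)]; rfl

lemma Btot_n (s : ℕ → ℕ) (n : ℕ) : Btot s n n = 0 := by
  simp [Btot]

lemma sum_ends (f : ℕ → ℕ) (m : ℕ) (hm : 1 ≤ m)
    (h : ∀ t, 1 ≤ t → t < m → f t = 0) :
    ∑ t ∈ Finset.range (m + 1), f t = f 0 + f m := by
  rw [Finset.sum_range_succ,
    Finset.sum_eq_single_of_mem 0 (Finset.mem_range.mpr (by omega))
      (fun b hb hb0 => h b (by omega) (Finset.mem_range.mp hb))]

lemma source_zero {s : ℕ → ℕ} {n : ℕ} {f : ℕ → ℕ → ℕ} (h : IsIntDFlow s n f) :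
    ∀ i t, 1 ≤ t → t + 1 ≤ sExt s n i → f i t = 0 := by
  intro i t ht hts
  by_cases h1 : 1 ≤ i ∧ i ≤ n + 1
  · have hi' := (Finset.sum_eq_zero_iff.mp h.2.2.2.2) i (Finset.mem_Icc.mpr ⟨h1.1, h1.2⟩)
    exact (Finset.sum_eq_zero_iff.mp hi') t (Finset.mem_Icc.mpr ⟨ht, by omega⟩)
  · exact h.1 i t (by omega)

lemma pair_sum {s : ℕ → ℕ} {n : ℕ} {f : ℕ → ℕ → ℕ} (hn : 0 < n)
    (hs : ∀ i, 1 ≤ i → i ≤ n → 1 ≤ s i) (h : IsIntDFlow s n f) :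
    ∀ i, 1 ≤ i → i ≤ n → f i 0 + f i (s i) = Btot s n i := by
  intro i hi
  induction i, hi using Nat.le_induction with
  | base =>
    intro _
    have hsum := h.2.2.2.1
    rw [sum_ends _ _ (hs 1 le_rfl hn) (fun t ht1 ht2 => source_zero h 1 t ht1
      (by simp only [sExt]; rw [if_neg (by omega)]; omega))] at hsum
    rw [hsum]; rfl
  | succ i hi ih =>
    intro hin
    have h3 := h.2.2.1 (i + 1) (by omega) hin
    rw [sum_ends _ _ (hs (i + 1) (by omega) hin) (fun t ht1 ht2 => source_zero h (i + 1) t ht1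
      (by simp only [sExt]; rw [if_neg (by omega)]; omega))] at h3
    have hb := Btot_step s n (i + 1) (by omega) hin
    simp only [Nat.add_sub_cancel] at h3 hb
    have := ih (by omega)
    omega

lemma flow_determined {s : ℕ → ℕ} {n : ℕ} {f : ℕ → ℕ → ℕ} (hn : 0 < n)
    (hs : ∀ i, 1 ≤ i → i ≤ n → 1 ≤ s i) (h : IsIntDFlow s n f) (i t : ℕ) :
    f i t = if 1 ≤ i ∧ i ≤ n - 1 then
        (if t = 0 then f i 0 else if t = s i then Btot s n i - f i 0 else 0)
      else 0 := by
  have hps := pair_sum hn hs h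
  by_cases hi : 1 ≤ i ∧ i ≤ n - 1
  · rw [if_pos hi]
    by_cases h0 : t = 0
    · rw [if_pos h0, h0]
    rw [if_neg h0]
    by_cases hsi : t = s i
    · rw [if_pos hsi, hsi]
      have := hps i hi.1 (by omega)
      omega
    rw [if_neg hsi]
    rcases lt_or_gt_of_ne hsi with hlt | hgt
    · exact source_zero h i t (by omega) (by simp only [sExt]; rw [if_neg (by omega)]; omega)
    · exact h.1 i t (by right; right; left; simp only [sExt]; rw [if_neg (by omega)]; omega)
  · rw [if_neg hi]
    rcases Nat.lt_or_ge i 1 with h0 | h1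
    · exact h.1 i t (by omega)
    rcases Nat.lt_or_ge i (n + 1) with hlt | hge
    · have hin : i = n := by omega
      have hp := hps i h1 (by omega)
      rw [hin, Btot_n] at hp
      rw [← hin] at hp
      by_cases h0 : t = 0
      · subst h0; omega
      by_cases hsi : t = s i
      · subst hsi; omega
      rcases lt_or_gt_of_ne hsi with hlt' | hgt'
      · exact source_zero h i t (by omega) (by simp only [sExt]; rw [if_neg (by omega)]; omega)
      · exact h.1 i t (by right; right; left; simp only [sExt]; rw [if_neg (by omega)]; omega)
    · rcases Nat.lt_or_ge (n + 1) i with hgt | heq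
      · exact h.1 i t (by omega)
      · have hieq : i = n + 1 := by omega
        by_cases h1t : t = 1
        · subst h1t
          have hp := hps n (by omega) le_rfl
          rw [Btot_n] at hp
          rw [hieq, h.2.1]; omega
        · exact h.1 i t (Or.inr (Or.inr (Or.inr ⟨hieq, h1t⟩)))

def mkF (s : ℕ → ℕ) (n : ℕ) (G : ℕ → ℕ) : ℕ → ℕ → ℕ := fun i t =>
  if 1 ≤ i ∧ i ≤ n - 1 then
    if t = 0 then G (i - 1) else if t = s i then Btot s n i - G (i - 1) else 0
  else 0

lemma mkF_outside {s : ℕ → ℕ} {n : ℕ} {G : ℕ → ℕ} (i t : ℕ)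
    (h : ¬(1 ≤ i ∧ i ≤ n - 1)) : mkF s n G i t = 0 := by
  simp only [mkF, if_neg h]

lemma mkF_other {s : ℕ → ℕ} {n : ℕ} {G : ℕ → ℕ} (i t : ℕ)
    (h0 : t ≠ 0) (hsi : t ≠ s i) : mkF s n G i t = 0 := by
  by_cases h : 1 ≤ i ∧ i ≤ n - 1
  · simp only [mkF, if_pos h, if_neg h0, if_neg hsi]
  · exact mkF_outside i t h

lemma mkF_ends {s : ℕ → ℕ} {n : ℕ} {G : ℕ → ℕ} (i : ℕ) (hi : 1 ≤ i) (hin : i ≤ n)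
    (hG : ∀ j, 1 ≤ j → j ≤ n - 1 → G (j - 1) ≤ Btot s n j) (hsi : 1 ≤ s i) :
    mkF s n G i 0 + mkF s n G i (s i) = Btot s n i := by
  by_cases hle : i ≤ n - 1
  · rw [show mkF s n G i 0 = G (i - 1) from by
        simp only [mkF, if_pos (show 1 ≤ i ∧ i ≤ n - 1 from ⟨hi, hle⟩)]; rw [if_pos trivial],
      show mkF s n G i (s i) = Btot s n i - G (i - 1) from by
        simp only [mkF, if_pos (show 1 ≤ i ∧ i ≤ n - 1 from ⟨hi, hle⟩)];
        rw [if_neg (show ¬ s i = 0 from by omega), if_pos trivial]]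
    have := hG i hi hle
    omega
  · have hin' : i = n := by omega
    rw [mkF_outside i 0 (fun hc => hle hc.2), mkF_outside i (s i) (fun hc => hle hc.2), hin',
      Btot_n]

lemma mkF_isFlow (n : ℕ) (hn : 0 < n) (s : ℕ → ℕ)
    (hs : ∀ i, 1 ≤ i → i ≤ n → 1 ≤ s i) (G : ℕ → ℕ)
    (hG : ∀ j, 1 ≤ j → j ≤ n - 1 → G (j - 1) ≤ Btot s n j) :
    IsIntDFlow s n (mkF s n G) := by
  have hsum : ∀ i, 1 ≤ i → i ≤ n →
      ∑ t ∈ Finset.range (s i + 1), mkF s n G i t = mkF s n G i 0 + mkF s n G i (s i) :=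
    fun i h1 h2 => sum_ends _ _ (hs i h1 h2)
      (fun t ht1 ht2 => mkF_other i t (by omega) (by omega))
  refine ⟨?_, ?_, ?_, ?_, ?_⟩
  · intro i t hd
    rcases hd with h0 | hgt | hst | hn1
    · exact mkF_outside i t (by omega)
    · exact mkF_outside i t (by omega)
    · by_cases hi : 1 ≤ i ∧ i ≤ n - 1
      · have hse : sExt s n i = s i := by simp only [sExt]; rw [if_neg (by omega)]
        rw [hse] at hst
        have := hs i hi.1 (by omega)
        exact mkF_other i t (by omega) (by omega)
      · exact mkF_outside i t hi
    · exact mkF_outside i t (by omega)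
  · have hend := mkF_ends (G := G) n (by omega) le_rfl hG (hs n (by omega) le_rfl)
    rw [Btot_n] at hend
    rw [mkF_outside (n + 1) 1 (by omega)]
    omega
  · intro i h2 hin
    rw [hsum i (by omega) hin,
      mkF_ends i (by omega) hin hG (hs i (by omega) hin),
      mkF_ends (i - 1) (by omega) (by omega) hG (hs (i - 1) (by omega) (by omega)),
      Btot_step s n i (by omega) hin]
    omega
  · rw [hsum 1 le_rfl hn, mkF_ends 1 le_rfl hn hG (hs 1 le_rfl hn)]
    rfl
  · refine Finset.sum_eq_zero fun i hi => Finset.sum_eq_zero fun t ht => ?_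
    simp only [Finset.mem_Icc] at hi ht
    by_cases hii : 1 ≤ i ∧ i ≤ n - 1
    · have hse : sExt s n i = s i := by simp only [sExt]; rw [if_neg (by omega)]
      rw [hse] at ht
      have := hs i hii.1 (by omega)
      exact mkF_other i t (by omega) (by omega)
    · exact mkF_outside i t hii

lemma prod_eq (n : ℕ) (s : ℕ → ℕ) :
    ∏ i : Fin (n - 1), ((∑ r ∈ Finset.Icc ((i : ℕ) + 2) n, s r) + 1) =
      ∏ i ∈ Finset.Icc 1 (n - 1), (1 + ∑ r ∈ Finset.Icc (n - i + 1) n, s r) := by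
  have hR : ∏ i ∈ Finset.Icc 1 (n - 1), (1 + ∑ r ∈ Finset.Icc (n - i + 1) n, s r)
      = ∏ i ∈ Finset.Icc 1 (n - 1), (1 + ∑ r ∈ Finset.Icc (i + 1) n, s r) := by
    refine Finset.prod_nbij' (fun a => n - a) (fun a => n - a) ?_ ?_ ?_ ?_ ?_
    · intro a ha; simp only [Finset.mem_Icc] at *; omega
    · intro a ha; simp only [Finset.mem_Icc] at *; omega
    · intro a ha; simp only [Finset.mem_Icc] at ha; show n - (n - a) = a; omega
    · intro a ha; simp only [Finset.mem_Icc] at ha; show n - (n - a) = a; omega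
    · intro a ha
      simp only [Finset.mem_Icc] at ha
      show 1 + ∑ r ∈ Finset.Icc (n - a + 1) n, s r = 1 + ∑ r ∈ Finset.Icc (n - a + 1) n, s r
      rfl
  rw [hR, Fin.prod_univ_eq_prod_range (fun j => (∑ r ∈ Finset.Icc (j + 2) n, s r) + 1) (n - 1)]
  refine Finset.prod_nbij' (fun j => j + 1) (fun j => j - 1) ?_ ?_ ?_ ?_ ?_
  · intro a ha; simp only [Finset.mem_range] at ha; simp only [Finset.mem_Icc]; omega
  · intro a ha; simp only [Finset.mem_Icc] at ha; simp only [Finset.mem_range]; omega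
  · intro a ha; simp only [Finset.mem_range] at ha; show a + 1 - 1 = a; omega
  · intro a ha; simp only [Finset.mem_Icc] at ha; show a - 1 + 1 = a; omega
  · intro a ha
    show ∑ r ∈ Finset.Icc (a + 2) n, s r + 1 = 1 + ∑ r ∈ Finset.Icc (a + 1 + 1) n, s r
    rw [add_comm]

/-- (Proposition 3.2 and Corollary 3.3 of the paper.) For a
composition `s` of positive integers, the number of integer flows on the
`s`-oruga graph with netflow `d = (0, 0, sₙ, …, s₂, -∑_{i=2}^n sᵢ)` equals
`∏_{i=1}^{n-1} (1 + s_{n-i+1} + ⋯ + sₙ)`.  Moreover such a flow has zero flow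
on every source-edge and is uniquely determined by the flows
`fᵢ ∈ {0, 1, …, sₙ + ⋯ + s_{i+1}}` on the bump edges `e^i_0`, `i = 1, …, n-1`:
recording these values is a bijection onto the set of all such tuples. -/
theorem card_integer_dFlows (n : ℕ) (hn : 0 < n) (s : ℕ → ℕ)
    (hs : ∀ i, 1 ≤ i → i ≤ n → 1 ≤ s i) :
    Nat.card {f : ℕ → ℕ → ℕ // IsIntDFlow s n f} =
      ∏ i ∈ Finset.Icc 1 (n - 1), (1 + ∑ r ∈ Finset.Icc (n - i + 1) n, s r) ∧
    (∀ f : ℕ → ℕ → ℕ, IsIntDFlow s n f →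
      ∀ i t, 1 ≤ t → t + 1 ≤ sExt s n i → f i t = 0) ∧
    Set.BijOn
      (fun f : {f : ℕ → ℕ → ℕ // IsIntDFlow s n f} =>
        fun i : Fin (n - 1) => f.1 ((i : ℕ) + 1) 0)
      Set.univ
      {g : Fin (n - 1) → ℕ | ∀ i : Fin (n - 1),
        g i ≤ ∑ r ∈ Finset.Icc ((i : ℕ) + 2) n, s r} := by
  have hmaps : Set.MapsTo
      (fun f : {f : ℕ → ℕ → ℕ // IsIntDFlow s n f} =>
        fun i : Fin (n - 1) => f.1 ((i : ℕ) + 1) 0)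
      Set.univ
      {g : Fin (n - 1) → ℕ | ∀ i : Fin (n - 1),
        g i ≤ ∑ r ∈ Finset.Icc ((i : ℕ) + 2) n, s r} := by
    rintro ⟨f, hf⟩ - i
    have hp := pair_sum hn hs hf ((i : ℕ) + 1) (by omega) (by have := i.isLt; omega)
    have hBe : Btot s n ((i : ℕ) + 1) = ∑ r ∈ Finset.Icc ((i : ℕ) + 2) n, s r := rfl
    simp only [Set.mem_setOf_eq]
    omega
  have hinj : Set.InjOn
      (fun f : {f : ℕ → ℕ → ℕ // IsIntDFlow s n f} =>
        fun i : Fin (n - 1) => f.1 ((i : ℕ) + 1) 0)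
      Set.univ := by
    rintro ⟨f, hf⟩ - ⟨f', hf'⟩ - heq
    apply Subtype.ext
    funext i t
    show f i t = f' i t
    rw [flow_determined hn hs hf i t, flow_determined hn hs hf' i t]
    by_cases hi : 1 ≤ i ∧ i ≤ n - 1
    · have h2 : f (i - 1 + 1) 0 = f' (i - 1 + 1) 0 := congrFun heq ⟨i - 1, by omega⟩
      rw [show i - 1 + 1 = i from by omega] at h2
      rw [if_pos hi, if_pos hi, h2]
    · rw [if_neg hi, if_neg hi]
  have hsurj : Set.SurjOn
      (fun f : {f : ℕ → ℕ → ℕ // IsIntDFlow s n f} =>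
        fun i : Fin (n - 1) => f.1 ((i : ℕ) + 1) 0)
      Set.univ
      {g : Fin (n - 1) → ℕ | ∀ i : Fin (n - 1),
        g i ≤ ∑ r ∈ Finset.Icc ((i : ℕ) + 2) n, s r} := by
    rintro g hg
    simp only [Set.mem_setOf_eq] at hg
    set G : ℕ → ℕ := fun j => if h : j < n - 1 then g ⟨j, h⟩ else 0 with hGdef
    have hG : ∀ j, 1 ≤ j → j ≤ n - 1 → G (j - 1) ≤ Btot s n j := by
      intro j h1 h2
      have hlt : j - 1 < n - 1 := by omega
      have hgj := hg ⟨j - 1, hlt⟩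
      simp only [hGdef]
      rw [dif_pos hlt]
      calc g ⟨j - 1, hlt⟩ ≤ ∑ r ∈ Finset.Icc ((j - 1 : ℕ) + 2) n, s r := hgj
        _ = Btot s n j := by rw [Btot]; congr 2; omega
    refine ⟨⟨mkF s n G, mkF_isFlow n hn s hs G hG⟩, Set.mem_univ _, ?_⟩
    funext i
    show mkF s n G ((i : ℕ) + 1) 0 = g i
    have hcond : 1 ≤ (i : ℕ) + 1 ∧ (i : ℕ) + 1 ≤ n - 1 := ⟨by omega, by have := i.isLt; omega⟩
    simp only [mkF, if_pos hcond, Nat.add_sub_cancel, hGdef]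
    rw [if_pos trivial, dif_pos i.isLt]
  have hbij := Set.BijOn.mk hmaps hinj hsurj
  refine ⟨?_, fun f hf => source_zero hf, hbij⟩
  have e : {f : ℕ → ℕ → ℕ // IsIntDFlow s n f} ≃
      {g : Fin (n - 1) → ℕ | ∀ i : Fin (n - 1),
        g i ≤ ∑ r ∈ Finset.Icc ((i : ℕ) + 2) n, s r} :=
    (Equiv.Set.univ _).symm.trans (hbij.equiv _)
  have e2 : {g : Fin (n - 1) → ℕ | ∀ i : Fin (n - 1),
        g i ≤ ∑ r ∈ Finset.Icc ((i : ℕ) + 2) n, s r} ≃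
      ∀ i : Fin (n - 1), Fin ((∑ r ∈ Finset.Icc ((i : ℕ) + 2) n, s r) + 1) :=
    { toFun := fun g i => ⟨g.1 i, Nat.lt_succ_of_le (g.2 i)⟩
      invFun := fun h => ⟨fun i => h i, fun i => Nat.lt_succ_iff.mp (h i).isLt⟩
      left_inv := fun g => rfl
      right_inv := fun h => rfl }
  rw [Nat.card_congr (e.trans e2)]
  rw [Nat.card_eq_fintype_card]
  simp only [Fintype.card_pi, Fintype.card_fin]
  exact prod_eq n s


end SPermutahedron
end
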